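/- For all natural numbers n, λ, μ, the sum over k from 0 to n of C(n+μn, k) * C(n+λn, n-k) * H_{λn+k} equals C(2n+λn+μn, n) * (H_{λn+n} + H_{λn+μn+n} - H_{λn+μn+2n}). -/

import Mathlib

/-!
Write `S(a,c,n) = ∑_k C(a,k) C(c+n,n-k) H_{c+k}`; the theorem is the case `a = n + μn`, `c = λn` of
`S(a,c,n) = C(a+c+n,n) (H_{c+n} + H_{a+c} - H_{a+c+n})`.
Pascal's rule in `a` gives `S(a+1,c,n+1) = S(a,c+1,n) + S(a,c,n+1)`, and the closed form satisfies the
same recursion because `C(A+n+1,n+1)/(A+1) = C(A+n+2,n+1)/(A+n+2)`. Both boundary cases `a = 0` and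
`n = 0` are immediate, so induction on `a` finishes the proof.
-/

open Finset

def harmonicQ (m : Nat) : ℚ := ∑ j ∈ Finset.range m, (1 : ℚ) / (j + 1)

def binomHarmonicSum (a c n : ℕ) : ℚ :=
  ∑ k ∈ range (n + 1), (a.choose k : ℚ) * ((c + n).choose (n - k) : ℚ) * harmonicQ (c + k)

lemma harmonicQ_succ (m : ℕ) : harmonicQ (m + 1) = harmonicQ m + 1 / ((m : ℚ) + 1) := by
  simp [harmonicQ, Finset.sum_range_succ]

lemma binomHarmonicSum_zero_left (c n : ℕ) :
    binomHarmonicSum 0 c n = ((c + n).choose n : ℚ) * harmonicQ c := by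
  rw [binomHarmonicSum, sum_eq_single 0]
  · simp
  · intro k _ hk
    simp [Nat.choose_eq_zero_of_lt (Nat.pos_of_ne_zero hk)]
  · simp

lemma binomHarmonicSum_zero_right (a c : ℕ) : binomHarmonicSum a c 0 = harmonicQ c := by
  simp [binomHarmonicSum]

lemma binomHarmonicSum_succ_succ (a c n : ℕ) :
    binomHarmonicSum (a + 1) c (n + 1)
      = binomHarmonicSum a (c + 1) n + binomHarmonicSum a c (n + 1) := by
  have pascal : ∀ k ∈ range (n + 1),
      ((a + 1).choose (k + 1) : ℚ) * ((c + (n + 1)).choose (n + 1 - (k + 1)) : ℚ)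
          * harmonicQ (c + (k + 1))
        = (a.choose k : ℚ) * ((c + 1 + n).choose (n - k) : ℚ) * harmonicQ (c + 1 + k)
          + (a.choose (k + 1) : ℚ) * ((c + (n + 1)).choose (n + 1 - (k + 1)) : ℚ)
            * harmonicQ (c + (k + 1)) := by
    intro k _
    rw [Nat.choose_succ_succ', show c + 1 + n = c + (n + 1) by ring,
      show c + 1 + k = c + (k + 1) by ring]
    push_cast
    ring
  simp only [binomHarmonicSum]
  rw [sum_range_succ', sum_range_succ' _ (n + 1), sum_congr rfl pascal, sum_add_distrib]
  simp only [Nat.choose_zero_right, Nat.cast_one]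
  ring

lemma choose_div_eq_succ_choose_div (A n : ℕ) :
    ((A + n + 1).choose (n + 1) : ℚ) / (A + 1) = ((A + n + 2).choose (n + 1) : ℚ) / (A + n + 2) := by
  have h := Nat.choose_mul_succ_eq (A + n + 1) (n + 1)
  rw [show A + n + 1 + 1 - (n + 1) = A + 1 by omega] at h
  rw [div_eq_div_iff (by positivity) (by positivity)]
  exact_mod_cast h

lemma choose_mul_harmonicQ_pascal (A n : ℕ) (X : ℚ) :
    ((A + n + 1).choose n : ℚ) * (X + harmonicQ (A + 1) - harmonicQ (A + n + 1))
      + ((A + n + 1).choose (n + 1) : ℚ) * (X + harmonicQ A - harmonicQ (A + n + 1))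
    = ((A + n + 2).choose (n + 1) : ℚ) * (X + harmonicQ (A + 1) - harmonicQ (A + n + 2)) := by
  have pascal : ((A + n + 2).choose (n + 1) : ℚ)
      = ((A + n + 1).choose n : ℚ) + ((A + n + 1).choose (n + 1) : ℚ) := by
    exact_mod_cast Nat.choose_succ_succ' (A + n + 1) n
  have ratio := choose_div_eq_succ_choose_div A n
  rw [harmonicQ_succ A, show A + n + 2 = A + n + 1 + 1 by ring, harmonicQ_succ (A + n + 1)]
  push_cast at ratio ⊢
  linear_combination -(X + harmonicQ A + 1 / ((A : ℚ) + 1) - harmonicQ (A + n + 1)) * pascal - ratio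

lemma binomHarmonicSum_eq (a c n : ℕ) :
    binomHarmonicSum a c n = ((a + c + n).choose n : ℚ)
      * (harmonicQ (c + n) + harmonicQ (a + c) - harmonicQ (a + c + n)) := by
  induction a generalizing c n with
  | zero =>
    rw [binomHarmonicSum_zero_left, zero_add]
    ring
  | succ a ih =>
    cases n with
    | zero => simp [binomHarmonicSum_zero_right]
    | succ n =>
      rw [binomHarmonicSum_succ_succ, ih, ih]
      have h := choose_mul_harmonicQ_pascal (a + c) n (harmonicQ (c + n + 1))
      rw [show a + (c + 1) + n = a + c + n + 1 by ring, show a + (c + 1) = a + c + 1 by ring,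
        show c + 1 + n = c + n + 1 by ring,
        show a + 1 + c + (n + 1) = a + c + n + 2 by ring, show a + 1 + c = a + c + 1 by ring,
        ← add_assoc c n 1, ← add_assoc (a + c) n 1]
      exact h

theorem stmt2 (n l m : ℕ) :
    ∑ k ∈ range (n + 1), ((n + m * n).choose k : ℚ) * ((n + l * n).choose (n - k) : ℚ) * harmonicQ (l * n + k)
      = ((2 * n + l * n + m * n).choose n : ℚ) *
        (harmonicQ (l * n + n) + harmonicQ (l * n + m * n + n) - harmonicQ (l * n + m * n + 2 * n)) := by
  have h := binomHarmonicSum_eq (n + m * n) (l * n) n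
  rw [binomHarmonicSum, show l * n + n = n + l * n by ring] at h
  rw [h]
  ring_nf
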